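/- arXiv:2501.02072 — 8 statements merged into one kernel-verified Lean document; each statement's English description precedes it below -/
import Mathlib

section
/- Let S be a unital ring, p ≥ 3 an odd natural number, and g a central element of S with g^p = 1. Then for every t ≥ 0, the product ∏_{k=0}^{t} (1 + g^(2^k)) can be written as a^2 + b^2 for some a, b ∈ S. -/
/-!
Since `p` is odd, `g = g ^ (p + 1) = (g ^ ((p + 1) / 2)) ^ 2` is a square, hence so is every
`g ^ (2 ^ k)`, and each factor `1 + g ^ (2 ^ k)` is a sum of two squares. All these elements lie in
the commutative ring `Subring.center S`, where the Brahmagupta–Fibonacci identity makes sums of two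
squares closed under multiplication.
-/

def sumTwoSquares (R : Type*) [CommRing R] : Submonoid R where
  carrier := {x | ∃ a b : R, x = a ^ 2 + b ^ 2}
  one_mem' := ⟨1, 0, by ring⟩
  mul_mem' := by
    rintro _ _ ⟨a, b, rfl⟩ ⟨c, d, rfl⟩
    exact ⟨_, _, sq_add_sq_mul_sq_add_sq⟩

theorem one_add_mem_sumTwoSquares {R : Type*} [CommRing R] {x : R} (hx : IsSquare x) :
    1 + x ∈ sumTwoSquares R := by
  obtain ⟨r, rfl⟩ := hx
  exact ⟨1, r, by ring⟩

theorem isSquare_of_pow_eq_one_of_odd {M : Type*} [Monoid M] {g : M} {p : ℕ} (hodd : Odd p)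
    (hgp : g ^ p = 1) : IsSquare g := by
  obtain ⟨j, rfl⟩ := hodd
  refine ⟨g ^ (j + 1), ?_⟩
  rw [← pow_add, show j + 1 + (j + 1) = 2 * j + 1 + 1 by ring, pow_succ, hgp, one_mul]

theorem stmt0_general {S : Type*} [Ring S] (p : ℕ) (hodd : Odd p)
    (g : S) (hg : g ∈ Set.center S) (hgp : g ^ p = 1) (t : ℕ) :
    ∃ a b : S, ((List.range (t + 1)).map (fun k => 1 + g ^ (2 ^ k))).prod = a ^ 2 + b ^ 2 := by
  let g' : Subring.center S := ⟨g, hg⟩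
  have hsq : IsSquare g' := isSquare_of_pow_eq_one_of_odd hodd (Subtype.ext hgp)
  have hprod : ((List.range (t + 1)).map (fun k => 1 + g' ^ (2 ^ k))).prod ∈ sumTwoSquares _ :=
    Submonoid.list_prod_mem _ <| by
      simpa using fun k _ => one_add_mem_sumTwoSquares (hsq.pow (2 ^ k))
  obtain ⟨a, b, hab⟩ := hprod
  refine ⟨a, b, ?_⟩
  simpa [g', SubmonoidClass.coe_list_prod, Function.comp_def] using congrArg Subtype.val hab

theorem stmt0 {S : Type*} [Ring S] (p : ℕ) (hp : 3 ≤ p) (hodd : Odd p)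
    (g : S) (hg : g ∈ Set.center S) (hgp : g ^ p = 1) (t : ℕ) :
    ∃ a b : S, ((List.range (t + 1)).map (fun k => 1 + g ^ (2 ^ k))).prod = a ^ 2 + b ^ 2 :=
  stmt0_general p hodd g hg hgp t
end

section
/- Let S be a unital ring, p ≥ 3 an odd natural number, and g a central element of S with g^p = 1. If n ∈ ℕ is such that p divides 2^n + 1, then there exist α, β ∈ S with (α^2 + β^2 + g^(2^n)) · (g - 1) = 0. -/
/-!
Since `p` is odd, `g = h ^ 2` with `h = g ^ ((p + 1) / 2)`, so every factor of
`Q = ∏_{k < n} (1 + g ^ 2 ^ k)` has the form `1 + (h ^ 2 ^ k) ^ 2` and, by the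
Brahmagupta–Fibonacci identity, `Q` is a sum of two squares. Telescoping gives
`(Q + g ^ 2 ^ n) * (g - 1) = g ^ (2 ^ n + 1) - 1`, which vanishes because `p ∣ 2 ^ n + 1`.
All of this takes place in the commutative subring `Subring.center S`.
-/

open Finset

theorem exists_sq_eq_of_pow_eq_one_of_odd {M : Type*} [Monoid M] {g : M} {p : ℕ}
    (hodd : Odd p) (hgp : g ^ p = 1) : ∃ h : M, h ^ 2 = g := by
  obtain ⟨m, rfl⟩ := hodd
  exact ⟨g ^ (m + 1), by rw [← pow_mul, show (m + 1) * 2 = 2 * m + 1 + 1 by ring, pow_succ, hgp,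
    one_mul]⟩

section CommRing

variable {R : Type*} [CommRing R]

theorem Finset.exists_prod_one_add_sq_eq_sq_add_sq {ι : Type*} (s : Finset ι) (f : ι → R) :
    ∃ a b : R, ∏ i ∈ s, (1 + f i ^ 2) = a ^ 2 + b ^ 2 := by
  induction s using Finset.cons_induction with
  | empty => exact ⟨1, 0, by simp⟩
  | cons i s _ ih =>
    obtain ⟨a, b, hab⟩ := ih
    rw [prod_cons]
    exact sq_add_sq_mul (x := 1) (y := f i) (by rw [one_pow]) hab

theorem prod_range_one_add_pow_two_pow_mul_sub_one (x : R) (n : ℕ) :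
    (∏ k ∈ range n, (1 + x ^ 2 ^ k)) * (x - 1) = x ^ 2 ^ n - 1 := by
  induction n with
  | zero => simp
  | succ n ih =>
    rw [prod_range_succ, mul_right_comm, ih, pow_succ, pow_mul]
    ring

theorem exists_sq_add_sq_add_pow_two_pow_mul_sub_one_eq_zero {g : R} {p n : ℕ} (hodd : Odd p)
    (hgp : g ^ p = 1) (hn : p ∣ 2 ^ n + 1) :
    ∃ α β : R, (α ^ 2 + β ^ 2 + g ^ 2 ^ n) * (g - 1) = 0 := by
  obtain ⟨h, rfl⟩ := exists_sq_eq_of_pow_eq_one_of_odd hodd hgp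
  obtain ⟨α, β, hαβ⟩ := (range n).exists_prod_one_add_sq_eq_sq_add_sq fun k ↦ h ^ 2 ^ k
  have hQ : ∏ k ∈ range n, (1 + (h ^ 2) ^ 2 ^ k) = α ^ 2 + β ^ 2 := by
    simpa only [← pow_mul, mul_comm 2] using hαβ
  have hg : (h ^ 2) ^ (2 ^ n + 1) = 1 := by
    obtain ⟨k, hk⟩ := hn
    rw [hk, pow_mul, hgp, one_pow]
  refine ⟨α, β, ?_⟩
  calc (α ^ 2 + β ^ 2 + (h ^ 2) ^ 2 ^ n) * (h ^ 2 - 1)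
      = (∏ k ∈ range n, (1 + (h ^ 2) ^ 2 ^ k)) * (h ^ 2 - 1)
          + (h ^ 2) ^ 2 ^ n * (h ^ 2 - 1) := by rw [hQ, add_mul]
    _ = (h ^ 2) ^ (2 ^ n + 1) - 1 := by
      rw [prod_range_one_add_pow_two_pow_mul_sub_one, pow_succ]
      ring
    _ = 0 := by rw [hg, sub_self]

end CommRing

theorem stmt1_general {S : Type*} [Ring S] (p : ℕ) (hodd : Odd p)
    (g : S) (hg : g ∈ Set.center S) (hgp : g ^ p = 1) (n : ℕ) (hn : p ∣ 2 ^ n + 1) :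
    ∃ α β : S, (α ^ 2 + β ^ 2 + g ^ (2 ^ n)) * (g - 1) = 0 := by
  let g' : Subring.center S := ⟨g, hg⟩
  obtain ⟨α, β, h⟩ := exists_sq_add_sq_add_pow_two_pow_mul_sub_one_eq_zero (g := g') hodd
    (Subtype.ext hgp) hn
  exact ⟨α, β, congrArg Subtype.val h⟩

theorem stmt1 {S : Type*} [Ring S] (p : ℕ) (hp : 3 ≤ p) (hodd : Odd p)
    (g : S) (hg : g ∈ Set.center S) (hgp : g ^ p = 1) (n : ℕ) (hn : p ∣ 2 ^ n + 1) :
    ∃ α β : S, (α ^ 2 + β ^ 2 + g ^ (2 ^ n)) * (g - 1) = 0 :=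
  stmt1_general p hodd g hg hgp n hn
end

section
/- Let S be a unital ring, p ≥ 3 odd, g central in S with g^p = 1, and n with p ∣ 2^n + 1. Writing 2^n - 1 = pq + (p - 2) for a natural number q, one has ∏_{k=0}^{n-1} (1 + g^(2^k)) = (q+1) · (∑_{i=0}^{p-1} g^i) - g^(p-1). -/
/-! Binary expansion gives `∏_{k<n} (1 + g^(2^k)) = ∑_{i<2^n} g^i`; since `2^n = pq + (p-1)` and
`g^p = 1`, this geometric sum is `q` full periods plus the first `p - 1` terms of one more. -/

open Finset

theorem prod_range_one_add_pow_two_pow {R : Type*} [Semiring R] (x : R) (m : ℕ) :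
    ((List.range m).map (fun k => 1 + x ^ 2 ^ k)).prod = ∑ i ∈ range (2 ^ m), x ^ i := by
  induction m with
  | zero => simp
  | succ m ih =>
    rw [List.range_succ, List.map_append, List.prod_append, ih, pow_succ, mul_two,
      sum_range_add]
    simp [mul_add, sum_mul, ← pow_add, add_comm]

theorem sum_range_mul_add_pow_of_pow_eq_one {R : Type*} [Semiring R] {x : R} {p : ℕ}
    (hx : x ^ p = 1) (q r : ℕ) :
    ∑ i ∈ range (p * q + r), x ^ i = q * ∑ i ∈ range p, x ^ i + ∑ i ∈ range r, x ^ i := by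
  induction q with
  | zero => simp
  | succ q ih =>
    rw [show p * (q + 1) + r = p + (p * q + r) by ring, sum_range_add]
    simp only [pow_add, hx, one_mul, ih, Nat.cast_succ, add_mul]
    abel

theorem stmt2_general {S : Type*} [Ring S] (p n q : ℕ) (hp : 3 ≤ p)
    (g : S) (hgp : g ^ p = 1)
    (hq : 2 ^ n - 1 = p * q + (p - 2)) :
    ((List.range n).map (fun k => 1 + g ^ (2 ^ k))).prod
      = ((q : S) + 1) * (∑ i ∈ Finset.range p, g ^ i) - g ^ (p - 1) := by
  have h2n : 2 ^ n = p * q + (p - 1) := by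
    have := Nat.one_le_two_pow (n := n)
    omega
  have hsum : ∑ i ∈ range p, g ^ i = ∑ i ∈ range (p - 1), g ^ i + g ^ (p - 1) := by
    rw [← sum_range_succ, Nat.sub_add_cancel (by omega)]
  rw [prod_range_one_add_pow_two_pow, h2n, sum_range_mul_add_pow_of_pow_eq_one hgp, hsum]
  noncomm_ring

theorem stmt2 {S : Type*} [Ring S] (p n q : ℕ) (hp : 3 ≤ p) (hodd : Odd p)
    (g : S) (hg : g ∈ Set.center S) (hgp : g ^ p = 1) (hn : p ∣ 2 ^ n + 1)
    (hq : 2 ^ n - 1 = p * q + (p - 2)) :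
    ((List.range n).map (fun k => 1 + g ^ (2 ^ k))).prod
      = ((q : S) + 1) * (∑ i ∈ Finset.range p, g ^ i) - g ^ (p - 1) :=
  stmt2_general p n q hp g hgp hq
end

section
/- Let R be a ring with involution *. If p is a projection of R (p² = p = p*) such that both corner rings pRp and (1-p)R(1-p) are *-clean (with respect to the restricted involution), then R is *-clean. -/
/-- A ring with involution σ is σ-clean if every element is a unit plus a projection. -/
def StarClean {R : Type*} [Ring R] (σ : R → R) : Prop :=
  ∀ a : R, ∃ u p : R, IsUnit u ∧ p * p = p ∧ σ p = p ∧ a = u + p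

/-- The corner ring `eRe` (with identity `e`) is σ-clean: every element `e*a*e` is the
sum of a unit of the corner ring and a projection of the corner ring. -/
def CornerStarClean {R : Type*} [Ring R] (σ : R → R) (e : R) : Prop :=
  ∀ a : R, ∃ u v q : R,
    u = e * u * e ∧ v = e * v * e ∧ q = e * q * e ∧
    u * v = e ∧ v * u = e ∧ q * q = q ∧ σ q = q ∧ e * a * e = u + q

/-!
Write `q = 1 - p` and decompose `a` into its Peirce blocks. Given `p a p = u₁ + f₁` in `pRp`,
with `u₁` invertible there with inverse `v₁`, apply the hypothesis on `qRq` to the Schur complement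
`q (a - a v₁ a) q = u₂ + f₂`. Then the block LDU factorization
`a - (f₁ + f₂) = (1 + q a v₁) (u₁ + u₂) (1 + v₁ a q)` exhibits `a - (f₁ + f₂)` as a product of units:
the outer factors are `1` plus a square-zero element, and `u₁ + u₂` is inverted by `v₁ + v₂`.
Finally `f₁ + f₂` is a projection, because `f₁` and `f₂` live in orthogonal corners.
-/

open Subsemigroup

section Corner

variable {R : Type*} [Ring R] {e x y u v w : R}

lemma IsIdempotentElem.mul_eq_zero_of_mem_corner (he : IsIdempotentElem e)
    (hx : x ∈ corner e) (hy : y ∈ corner (1 - e)) : x * y = 0 ∧ y * x = 0 := by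
  obtain ⟨hex, hxe⟩ := (mem_corner_iff he).mp hx
  obtain ⟨hy₁, hy₂⟩ := (mem_corner_iff he.one_sub).mp hy
  constructor
  · rw [← hxe, ← hy₁, mul_assoc, ← mul_assoc e, he.mul_one_sub_self, zero_mul, mul_zero]
  · rw [← hex, ← hy₂, mul_assoc, ← mul_assoc (1 - e), he.one_sub_mul_self, zero_mul, mul_zero]

lemma IsIdempotentElem.one_sub_mem_corner (he : IsIdempotentElem e) : 1 - e ∈ corner (1 - e) :=
  (mem_corner_iff he.one_sub).mpr ⟨he.one_sub.eq, he.one_sub.eq⟩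

lemma isUnit_one_add_mul_mul_of_mul_eq_zero (hyx : y * x = 0) (b : R) :
    IsUnit (1 + x * b * y) :=
  IsNilpotent.isUnit_one_add ⟨2, by
    rw [pow_two, show x * b * y * (x * b * y) = x * b * (y * x) * b * y by noncomm_ring, hyx,
      mul_zero, zero_mul, zero_mul]⟩

lemma IsIdempotentElem.isUnit_add_of_mem_corner (he : IsIdempotentElem e)
    {u₁ v₁ u₂ v₂ : R} (hu₁ : u₁ ∈ corner e) (hv₁ : v₁ ∈ corner e)
    (hu₂ : u₂ ∈ corner (1 - e)) (hv₂ : v₂ ∈ corner (1 - e))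
    (huv₁ : u₁ * v₁ = e) (hvu₁ : v₁ * u₁ = e) (huv₂ : u₂ * v₂ = 1 - e) (hvu₂ : v₂ * u₂ = 1 - e) :
    IsUnit (u₁ + u₂) := by
  refine ⟨⟨u₁ + u₂, v₁ + v₂, ?_, ?_⟩, rfl⟩
  · rw [add_mul, mul_add, mul_add, huv₁, huv₂, (he.mul_eq_zero_of_mem_corner hu₁ hv₂).1,
      (he.mul_eq_zero_of_mem_corner hv₁ hu₂).2, add_zero, zero_add, add_sub_cancel]
  · rw [add_mul, mul_add, mul_add, hvu₁, hvu₂, (he.mul_eq_zero_of_mem_corner hv₁ hu₂).1,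
      (he.mul_eq_zero_of_mem_corner hu₁ hv₂).2, add_zero, zero_add, add_sub_cancel]

lemma IsIdempotentElem.ldu_factorization (he : IsIdempotentElem e) (hv : v ∈ corner e)
    (huv : u * v = e) (hvu : v * u = e) (hw : w ∈ corner (1 - e)) (b : R) :
    (1 + (1 - e) * b * v) * (u + w) * (1 + v * b * (1 - e)) =
      u + w + e * b * (1 - e) + (1 - e) * b * e + (1 - e) * b * v * b * (1 - e) := by
  obtain ⟨hwv, hvw⟩ := he.mul_eq_zero_of_mem_corner hv hw
  have hev : e * v = v := ((mem_corner_iff he).mp hv).1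
  have hright : (u + w) * v = e := by rw [add_mul, huv, hvw, add_zero]
  have hleft : v * (u + w) = e := by rw [mul_add, hvu, hwv, add_zero]
  calc (1 + (1 - e) * b * v) * (u + w) * (1 + v * b * (1 - e))
      = u + w + (u + w) * v * (b * (1 - e)) + (1 - e) * b * (v * (u + w))
          + (1 - e) * b * (v * (u + w)) * v * b * (1 - e) := by noncomm_ring
    _ = u + w + e * b * (1 - e) + (1 - e) * b * e + (1 - e) * b * v * b * (1 - e) := by
      rw [hright, hleft, mul_assoc ((1 - e) * b) e v, hev, mul_assoc e]

end Corner

theorem stmt6_general {R : Type*} [Ring R] (σ : R → R)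
    (hadd : ∀ a b : R, σ (a + b) = σ a + σ b)
    (p : R) (hp : p * p = p)
    (h1 : CornerStarClean σ p) (h2 : CornerStarClean σ (1 - p)) :
    StarClean σ := by
  have hp : IsIdempotentElem p := hp
  intro a
  obtain ⟨u₁, v₁, f₁, hu₁, hv₁, hf₁, huv₁, hvu₁, hf₁p, hf₁σ, ha₁⟩ := h1 a
  obtain ⟨u₂, v₂, f₂, hu₂, hv₂, hf₂, huv₂, hvu₂, hf₂p, hf₂σ, ha₂⟩ := h2 (a - a * v₁ * a)
  have hv₁c : v₁ ∈ corner p := ⟨v₁, hv₁.symm⟩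
  have hu₂c : u₂ ∈ corner (1 - p) := ⟨u₂, hu₂.symm⟩
  have hunit : IsUnit ((1 + (1 - p) * a * v₁) * (u₁ + u₂) * (1 + v₁ * a * (1 - p))) :=
    ((isUnit_one_add_mul_mul_of_mul_eq_zero
        (hp.mul_eq_zero_of_mem_corner hv₁c hp.one_sub_mem_corner).1 a).mul
      (hp.isUnit_add_of_mem_corner ⟨u₁, hu₁.symm⟩ hv₁c hu₂c ⟨v₂, hv₂.symm⟩
        huv₁ hvu₁ huv₂ hvu₂)).mul
      (isUnit_one_add_mul_mul_of_mul_eq_zero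
        (hp.mul_eq_zero_of_mem_corner hv₁c hp.one_sub_mem_corner).2 a)
  obtain ⟨hf₁f₂, hf₂f₁⟩ := hp.mul_eq_zero_of_mem_corner ⟨f₁, hf₁.symm⟩ ⟨f₂, hf₂.symm⟩
  refine ⟨_, f₁ + f₂, hunit, IsIdempotentElem.add hf₁p hf₂p (by rw [hf₁f₂, hf₂f₁, add_zero]),
    by rw [hadd, hf₁σ, hf₂σ], ?_⟩
  rw [hp.ldu_factorization hv₁c huv₁ hvu₁ hu₂c, eq_sub_of_add_eq ha₁.symm,
    eq_sub_of_add_eq ha₂.symm]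
  noncomm_ring

theorem stmt6 {R : Type*} [Ring R] (σ : R → R)
    (hadd : ∀ a b : R, σ (a + b) = σ a + σ b) (hmul : ∀ a b : R, σ (a * b) = σ b * σ a)
    (hinv : ∀ a : R, σ (σ a) = a)
    (p : R) (hp : p * p = p) (hps : σ p = p)
    (h1 : CornerStarClean σ p) (h2 : CornerStarClean σ (1 - p)) :
    StarClean σ :=
  stmt6_general σ hadd p hp h1 h2
end

section
/- Let R be a commutative unital ring with 2 ∈ U(R), G = H × C₂ with C₂ = ⟨a⟩ cyclic of order 2, and * an involution of RG induced by a group involution of G fixing a. If RH is *-clean (with the restricted involution), then RG is *-clean. -/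
namespace StarClean

variable {S T A : Type*} [Ring S] [Ring T] [Ring A]

theorem prod {σ : S → S} {τ : T → T} (hσ : StarClean σ) (hτ : StarClean τ) :
    StarClean (Prod.map σ τ) := by
  rintro ⟨s, t⟩
  obtain ⟨u, p, hu, hpp, hσp, rfl⟩ := hσ s
  obtain ⟨v, q, hv, hqq, hτq, rfl⟩ := hτ t
  exact ⟨(u, v), (p, q), Prod.isUnit_iff.mpr ⟨hu, hv⟩, by simp [hpp, hqq],
    by simp [hσp, hτq], rfl⟩

theorem of_surjective {τ : S → S} {σ : A → A} (φ : S →+* A) (hφ : Function.Surjective φ)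
    (hcomm : ∀ s, σ (φ s) = φ (τ s)) (hτ : StarClean τ) : StarClean σ := by
  intro a
  obtain ⟨s, rfl⟩ := hφ a
  obtain ⟨u, p, hu, hpp, hτp, rfl⟩ := hτ s
  exact ⟨φ u, φ p, hu.map φ, by rw [← map_mul, hpp], by rw [hcomm, hτp], map_add φ u p⟩

end StarClean

namespace RingHom

variable {S A : Type*} [Ring S] [Ring A]

def prodOfIdempotent (ι : S →+* A) {e : A} (he : IsIdempotentElem e)
    (hc : ∀ s, Commute e (ι s)) : S × S →+* A where
  toFun p := ι p.1 * e + ι p.2 * (1 - e)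
  map_one' := by simp
  map_zero' := by simp
  map_add' p q := by simp only [Prod.fst_add, Prod.snd_add, map_add]; noncomm_ring
  map_mul' p q := by
    have hc' : ∀ s, Commute (1 - e) (ι s) := fun s => (Commute.one_left _).sub_left (hc s)
    have hmul : ∀ {e₁ e₂ : A} (x y : S), Commute e₁ (ι y) →
        ι x * e₁ * (ι y * e₂) = ι (x * y) * (e₁ * e₂) := fun x y h => by
      rw [mul_assoc, ← mul_assoc _ (ι y), h.eq, map_mul, mul_assoc, mul_assoc]
    simp only [Prod.fst_mul, Prod.snd_mul, add_mul, mul_add, hmul _ _ (hc _),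
      hmul _ _ (hc' _), he.eq, he.one_sub.eq, he.mul_one_sub_self,
      he.one_sub_mul_self, mul_zero, add_zero, zero_add]

theorem prodOfIdempotent_apply (ι : S →+* A) {e : A} (he : IsIdempotentElem e)
    (hc : ∀ s, Commute e (ι s)) (p : S × S) :
    prodOfIdempotent ι he hc p = ι p.1 * e + ι p.2 * (1 - e) := rfl

end RingHom

theorem isIdempotentElem_invOf_two_smul_one_add {R A : Type*} [CommRing R] [Invertible (2 : R)]
    [Ring A] [Algebra R A] {a : A} (ha : a * a = 1) :
    IsIdempotentElem ((⅟2 : R) • (1 + a)) := by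
  have hsq : (1 + a) * (1 + a) = (2 : R) • (1 + a) := by
    rw [mul_add, add_mul, add_mul, ha, two_smul]; noncomm_ring
  rw [IsIdempotentElem, smul_mul_smul_comm, hsq, smul_smul, mul_assoc, invOf_mul_self, mul_one]

theorem invOf_two_smul_one_add_sub_one_sub {R A : Type*} [CommRing R] [Invertible (2 : R)]
    [Ring A] [Algebra R A] (a : A) : (⅟2 : R) • (1 + a) - (1 - (⅟2 : R) • (1 + a)) = a := by
  calc (⅟2 : R) • (1 + a) - (1 - (⅟2 : R) • (1 + a))
      _ = ((⅟2 : R) + ⅟2) • (1 + a) - 1 := by rw [add_smul]; abel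
      _ = a := by rw [invOf_two_add_invOf_two, one_smul, add_sub_cancel_left]

namespace MonoidAlgebra

open Function

variable {R H K : Type*} [CommRing R]

theorem commute_mapDomainRingHom_inr [Monoid H] [CommMonoid K] (w : MonoidAlgebra R K)
    (z : MonoidAlgebra R (H × K)) :
    Commute (mapDomainRingHom R (MonoidHom.inr H K) w) z := by
  induction w using induction_linear with
  | zero => simp
  | add w w' hw hw' => rw [map_add]; exact hw.add_left hw'
  | single c r =>
    simpa using single_commute (fun m => (Commute.one_left m.1).prod (Commute.all c m.2))
      (Commute.all r) z

theorem mapDomain_inl_mul_inr [Monoid H] [Monoid K] {σ : H × K → H × K} {σH : H → H}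
    (hσ : ∀ h c, σ (h, c) = (σH h, c)) (x : MonoidAlgebra R H) (w : MonoidAlgebra R K) :
    mapDomain σ
        (mapDomainRingHom R (MonoidHom.inl H K) x * mapDomainRingHom R (MonoidHom.inr H K) w) =
      mapDomainRingHom R (MonoidHom.inl H K) (mapDomain σH x) *
        mapDomainRingHom R (MonoidHom.inr H K) w := by
  induction x using induction_linear with
  | zero => simp
  | add x x' hx hx' => simp only [map_add, add_mul, mapDomain_add, hx, hx']
  | single h b =>
    induction w using induction_linear with
    | zero => simp
    | add w w' hw hw' => simp only [map_add, mul_add, mapDomain_add, hw, hw']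
    | single c r => simp [hσ]

section CyclicTwo

local notation "C₂" => Multiplicative (ZMod 2)

variable (R H) [Invertible (2 : R)] [Monoid H]

noncomputable def averagingIdempotent : MonoidAlgebra R C₂ :=
  (⅟2 : R) • (1 + single (Multiplicative.ofAdd 1) 1)

theorem isIdempotentElem_averagingIdempotent : IsIdempotentElem (averagingIdempotent R) :=
  isIdempotentElem_invOf_two_smul_one_add (by rw [single_mul_single, one_def, mul_one]; congr 1)

noncomputable def prodC2Hom :
    MonoidAlgebra R H × MonoidAlgebra R H →+* MonoidAlgebra R (H × C₂) :=
  RingHom.prodOfIdempotent (mapDomainRingHom R (MonoidHom.inl H C₂))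
    ((isIdempotentElem_averagingIdempotent R).map (mapDomainRingHom R (MonoidHom.inr H C₂)))
    fun _ => commute_mapDomainRingHom_inr _ _

variable {R H}

theorem prodC2Hom_apply (x y : MonoidAlgebra R H) : prodC2Hom R H (x, y) =
    mapDomainRingHom R (MonoidHom.inl H C₂) x *
        mapDomainRingHom R (MonoidHom.inr H C₂) (averagingIdempotent R) +
      mapDomainRingHom R (MonoidHom.inl H C₂) y *
        mapDomainRingHom R (MonoidHom.inr H C₂) (1 - averagingIdempotent R) := by
  rw [map_sub, map_one]; rfl

theorem prodC2Hom_apply_self (x : MonoidAlgebra R H) :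
    prodC2Hom R H (x, x) = mapDomainRingHom R (MonoidHom.inl H C₂) x := by
  rw [prodC2Hom_apply, ← mul_add, ← map_add, add_sub_cancel, map_one, mul_one]

theorem prodC2Hom_apply_neg (x : MonoidAlgebra R H) :
    prodC2Hom R H (x, -x) = mapDomainRingHom R (MonoidHom.inl H C₂) x *
      single (1, Multiplicative.ofAdd 1) 1 := by
  rw [prodC2Hom_apply, map_neg, neg_mul, ← sub_eq_add_neg, ← mul_sub, ← map_sub,
    averagingIdempotent, invOf_two_smul_one_add_sub_one_sub]
  simp

theorem prodC2Hom_surjective : Surjective (prodC2Hom R H) := by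
  intro z
  induction z using induction_linear with
  | zero => exact ⟨0, map_zero _⟩
  | add z z' hz hz' =>
    obtain ⟨p, rfl⟩ := hz
    obtain ⟨p', rfl⟩ := hz'
    exact ⟨p + p', map_add _ p p'⟩
  | single g b =>
    obtain ⟨h, c⟩ := g
    obtain rfl | rfl : c = 1 ∨ c = Multiplicative.ofAdd 1 := by revert c; decide
    · exact ⟨(single h b, single h b), by simp [prodC2Hom_apply_self]⟩
    · exact ⟨(single h b, -single h b), by simp [prodC2Hom_apply_neg]⟩

theorem mapDomain_prodC2Hom {σ : H × C₂ → H × C₂} {σH : H → H}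
    (hσ : ∀ h c, σ (h, c) = (σH h, c)) (p : MonoidAlgebra R H × MonoidAlgebra R H) :
    mapDomain σ (prodC2Hom R H p) =
      prodC2Hom R H (Prod.map (mapDomain σH) (mapDomain σH) p) := by
  obtain ⟨x, y⟩ := p
  rw [Prod.map_apply, prodC2Hom_apply, prodC2Hom_apply, mapDomain_add, mapDomain_inl_mul_inr hσ,
    mapDomain_inl_mul_inr hσ]

end CyclicTwo

end MonoidAlgebra

theorem stmt9_general {R H : Type*} [CommRing R] [Invertible (2 : R)] [Group H]
    (σ : H × Multiplicative (ZMod 2) → H × Multiplicative (ZMod 2))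
    (hanti : ∀ g h, σ (g * h) = σ h * σ g)
    (hfix : σ (1, Multiplicative.ofAdd (1 : ZMod 2)) = (1, Multiplicative.ofAdd (1 : ZMod 2)))
    (σH : H → H) (hres : ∀ h : H, σ (h, 1) = (σH h, 1))
    (hH : StarClean (R := MonoidAlgebra R H) (MonoidAlgebra.mapDomain σH)) :
    StarClean (R := MonoidAlgebra R (H × Multiplicative (ZMod 2))) (MonoidAlgebra.mapDomain σ) := by
  have hσ : ∀ h c, σ (h, c) = (σH h, c) := by
    intro h c
    obtain rfl | rfl : c = 1 ∨ c = Multiplicative.ofAdd 1 := by revert c; decide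
    · exact hres h
    · have hsplit : (h, Multiplicative.ofAdd (1 : ZMod 2)) =
          (1, Multiplicative.ofAdd 1) * (h, 1) := by simp
      rw [hsplit, hanti, hres, hfix, Prod.mk_mul_mk, mul_one, one_mul]
  exact (hH.prod hH).of_surjective (MonoidAlgebra.prodC2Hom R H)
    MonoidAlgebra.prodC2Hom_surjective (MonoidAlgebra.mapDomain_prodC2Hom hσ)

theorem stmt9 {R H : Type*} [CommRing R] [Invertible (2 : R)] [Group H]
    (σ : H × Multiplicative (ZMod 2) → H × Multiplicative (ZMod 2))
    (hanti : ∀ g h, σ (g * h) = σ h * σ g) (hinv : ∀ g, σ (σ g) = g)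
    (hfix : σ (1, Multiplicative.ofAdd (1 : ZMod 2)) = (1, Multiplicative.ofAdd (1 : ZMod 2)))
    (σH : H → H) (hres : ∀ h : H, σ (h, 1) = (σH h, 1))
    (hH : StarClean (R := MonoidAlgebra R H) (MonoidAlgebra.mapDomain σH)) :
    StarClean (R := MonoidAlgebra R (H × Multiplicative (ZMod 2))) (MonoidAlgebra.mapDomain σ) :=
  stmt9_general σ hanti hfix σH hres hH
end

section
/- Let R be a commutative unital ring with 2 invertible, G an SLC-group with commutator subgroup {1, s} and canonical involution *. Suppose there exist γ, τ ∈ RG such that (1 - γ²)·τ·(1 - s) = 0 and (z - 4⁻¹γ)·τ·(1 - s) ≠ 0 for all z ∈ R·Z(G) (the subring of RG spanned by central group elements). Then RG is not *-clean. -/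
open Classical in
/-- The canonical involution of an SLC-group: central elements are fixed,
noncentral elements are multiplied by `s`. -/
noncomputable def canonicalInvolution {G : Type*} [Group G] (s : G) : G → G :=
  fun g => if g ∈ Subgroup.center G then g else s * g
/-!
Write `t` for the central involution `s` in `RG`, `v = τ (1 - t)` and
`a = ½ (1 + γ) · ½ (1 - t)`. As `½ (1 - t)` is central and fixes `v`, and `γ² v = v`, the
element `a` acts idempotently on `v`. A projection `p` for the canonical involution splits as
`c + n` with `c` supported on `Z(G)` and `t n = n`, so `p (1 - t) = c (1 - t)`. If `a = u + p`
with `u` a unit, expanding `(u + p)² v = (u + p) v` and cancelling `u` gives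
`c v = v - a v = ½ (v - γ v)`; hence `z = ¼ - ½ c ∈ R·Z(G)` satisfies `(z - ¼ γ) v = 0`.
-/

open MonoidAlgebra

section Ring

variable {A : Type*} [Ring A]

theorem IsUnit.mul_eq_sub_mul_of_add_isIdempotentElem {u p c v : A} (hu : IsUnit u)
    (hp : IsIdempotentElem p) (hcu : Commute c u) (hpv : p * v = c * v)
    (hpuv : p * (u * v) = c * (u * v)) (hv : (u + p) * ((u + p) * v) = (u + p) * v) :
    c * v = v - (u + p) * v := by
  have hpcv : p * (c * v) = c * v := by rw [← hpv, ← mul_assoc, hp.eq]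
  have hcuv : c * (u * v) = u * (c * v) := hcu.left_comm v
  have key : u * ((u + p) * v + c * v - v) = (u + p) * ((u + p) * v) - (u + p) * v := by
    simp only [add_mul, mul_add, mul_sub, hpv, hpuv, hpcv, hcuv]
    abel
  rw [hv, sub_self, hu.mul_right_eq_zero] at key
  rw [eq_sub_iff_add_eq, ← sub_eq_zero, ← key]
  abel

theorem mul_mul_mul_self_of_forall_commute {e f v : A} (hf : ∀ x, Commute f x)
    (hfv : f * v = v) (he : e * (e * v) = e * v) : e * f * (e * f * v) = e * f * v := by
  have hefv : e * f * v = e * v := by rw [mul_assoc, hfv]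
  rw [hefv, mul_assoc, (hf e).left_comm, hfv, he]

end Ring

section Algebra

variable {R A : Type*} [CommRing R] [Invertible (2 : R)] [Ring A] [Algebra R A]

theorem half_smul_one_sub_mul_one_sub {t : A} (ht : t * t = 1) :
    (⅟2 : R) • (1 - t) * (1 - t) = 1 - t := by
  have hsq : (1 - t) * (1 - t) = (2 : R) • (1 - t) := by
    rw [two_smul, sub_mul, one_mul, mul_sub, mul_one, ht]
    abel
  rw [smul_mul_assoc, hsq, smul_smul, invOf_mul_self, one_smul]

theorem half_smul_one_add_mul_mul_self {γ v : A} (hγ : γ ^ 2 * v = v) :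
    (⅟2 : R) • (1 + γ) * ((⅟2 : R) • (1 + γ) * v) = (⅟2 : R) • (1 + γ) * v := by
  have hγγ : γ * (γ * v) = v := by rw [← mul_assoc, ← sq, hγ]
  simp only [smul_mul_assoc, mul_smul_comm, add_mul, mul_add, one_mul, hγγ, smul_add, smul_smul]
  match_scalars <;> linear_combination (⅟2 : R) * invOf_mul_self (2 : R)

end Algebra

section GroupAlgebra

variable {R G : Type*} [CommRing R] [Group G]

def IsCentrallySupported (x : MonoidAlgebra R G) : Prop :=
  ∀ g ∈ x.coeff.support, g ∈ Subgroup.center G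

theorem IsCentrallySupported.commute {x : MonoidAlgebra R G} (hx : IsCentrallySupported x)
    (y : MonoidAlgebra R G) : Commute x y := by
  rw [← x.sum_coeff_single]
  refine Commute.sum_left _ _ _ fun g hg => single_commute (fun h => ?_) (Commute.all _) y
  exact (Subgroup.mem_center_iff.mp (hx g hg) h).symm

theorem isCentrallySupported_one : IsCentrallySupported (1 : MonoidAlgebra R G) := by
  intro g hg
  rw [one_def, coeff_single] at hg
  rw [Finset.mem_singleton.mp (Finsupp.support_single_subset hg)]
  exact one_mem _

theorem IsCentrallySupported.smul {x : MonoidAlgebra R G} (hx : IsCentrallySupported x) (r : R) :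
    IsCentrallySupported (r • x) :=
  fun g hg => hx g (Finsupp.support_smul hg)

theorem IsCentrallySupported.sub {x y : MonoidAlgebra R G} (hx : IsCentrallySupported x)
    (hy : IsCentrallySupported y) : IsCentrallySupported (x - y) := by
  classical
  exact fun g hg => (Finset.mem_union.mp (Finsupp.support_sub hg)).elim (hx g) (hy g)

open Classical in
noncomputable def centralPart (x : MonoidAlgebra R G) : MonoidAlgebra R G :=
  ofCoeff (x.coeff.filter (· ∈ Subgroup.center G))

theorem isCentrallySupported_centralPart (x : MonoidAlgebra R G) :
    IsCentrallySupported (centralPart x) := by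
  classical
  intro g hg
  rw [centralPart, coeff_ofCoeff, Finsupp.support_filter, Finset.mem_filter] at hg
  exact hg.2

theorem centralPart_add (x y : MonoidAlgebra R G) :
    centralPart (x + y) = centralPart x + centralPart y := by
  classical
  exact congrArg ofCoeff Finsupp.filter_add

theorem centralPart_single_of_mem {g : G} (hg : g ∈ Subgroup.center G) (r : R) :
    centralPart (single g r) = single g r := by
  classical
  exact congrArg ofCoeff (Finsupp.filter_single_of_pos _ hg)

theorem centralPart_single_of_not_mem {g : G} (hg : g ∉ Subgroup.center G) (r : R) :
    centralPart (single g r) = 0 := by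
  classical
  exact congrArg ofCoeff (Finsupp.filter_single_of_neg _ hg)

theorem commute_of_of_mem_center {s : G} (hs : s ∈ Subgroup.center G) (x : MonoidAlgebra R G) :
    Commute (of R G s) x :=
  single_commute (fun g => (Subgroup.mem_center_iff.mp hs g).symm) (Commute.all _) x

theorem mapDomain_canonicalInvolution (s : G) (x : MonoidAlgebra R G) :
    mapDomain (canonicalInvolution s) x = centralPart x + of R G s * (x - centralPart x) := by
  induction x using MonoidAlgebra.induction_linear with
  | zero => simp [centralPart, Finsupp.filter_zero]
  | add x y hx hy =>
    rw [mapDomain_add, hx, hy, centralPart_add]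
    noncomm_ring
  | single g r =>
    rw [mapDomain_single, canonicalInvolution]
    split_ifs with hg
    · rw [centralPart_single_of_mem hg, sub_self, mul_zero, add_zero]
    · rw [centralPart_single_of_not_mem hg, sub_zero, zero_add, of_apply, single_mul_single,
        one_mul]

theorem mul_one_sub_eq_centralPart_mul {s : G} (hs : s ∈ Subgroup.center G)
    {p : MonoidAlgebra R G} (hp : mapDomain (canonicalInvolution s) p = p) :
    p * (1 - of R G s) = centralPart p * (1 - of R G s) := by
  have hn : of R G s * (p - centralPart p) = p - centralPart p :=
    eq_sub_of_add_eq' ((mapDomain_canonicalInvolution s p).symm.trans hp)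
  rw [← sub_eq_zero, ← sub_mul, mul_sub, mul_one, ← (commute_of_of_mem_center hs _).eq, hn,
    sub_self]

variable [Invertible (2 : R)]

theorem centralPart_mul_eq_half_smul_sub {s : G} (hs : s ∈ Subgroup.center G) (hs2 : s ^ 2 = 1)
    {γ τ u p : MonoidAlgebra R G} (hγ : (1 - γ ^ 2) * τ * (1 - of R G s) = 0) (hu : IsUnit u)
    (hp : IsIdempotentElem p) (hσp : mapDomain (canonicalInvolution s) p = p)
    (ha : (⅟2 : R) • (1 + γ) * ((⅟2 : R) • (1 - of R G s)) = u + p) :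
    centralPart p * (τ * (1 - of R G s)) =
      (⅟2 : R) • (τ * (1 - of R G s) - γ * (τ * (1 - of R G s))) := by
  have ht : of R G s * of R G s = 1 := by rw [← map_mul, ← sq, hs2, map_one]
  have hE : ∀ x, Commute (1 - of R G s) x := fun x =>
    (Commute.one_left x).sub_left (commute_of_of_mem_center hs x)
  have hpE := mul_one_sub_eq_centralPart_mul hs hσp
  set t := of R G s
  set v := τ * (1 - t) with hv
  have hf : ∀ x, Commute ((⅟2 : R) • (1 - t)) x := fun x => (hE x).smul_left _
  have hfv : (⅟2 : R) • (1 - t) * v = v := by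
    rw [hv, (hf τ).left_comm, half_smul_one_sub_mul_one_sub ht]
  have hγv : γ ^ 2 * v = v := by
    rw [sub_mul, sub_mul, one_mul, sub_eq_zero] at hγ
    rw [hv, ← mul_assoc, ← hγ]
  have hpv : ∀ x, p * (x * v) = centralPart p * (x * v) := fun x => by
    have hxv : x * v = (1 - t) * (x * τ) := by rw [hv, ← mul_assoc, (hE _).eq]
    rw [hxv, ← mul_assoc p, ← mul_assoc (centralPart p), hpE]
  have hav : (u + p) * ((u + p) * v) = (u + p) * v := by
    rw [← ha]
    exact mul_mul_mul_self_of_forall_commute hf hfv (half_smul_one_add_mul_mul_self hγv)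
  rw [hu.mul_eq_sub_mul_of_add_isIdempotentElem hp ((isCentrallySupported_centralPart p).commute u)
    (by simpa using hpv 1) (hpv u) hav, ← ha, mul_assoc, hfv]
  simp only [smul_mul_assoc, add_mul, one_mul]
  match_scalars
  · linear_combination -invOf_two_add_invOf_two (R := R)
  · ring

end GroupAlgebra

theorem stmt12_general {R G : Type*} [CommRing R] [Invertible (2 : R)] [Group G]
    (s : G) (hs : s ∈ Subgroup.center G) (hs2 : s ^ 2 = 1)
    (γ τ : MonoidAlgebra R G)
    (h1 : (1 - γ ^ 2) * τ * (1 - MonoidAlgebra.of R G s) = 0)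
    (h2 : ∀ z : MonoidAlgebra R G, (∀ g ∈ z.coeff.support, g ∈ Subgroup.center G) →
      (z - (⅟2 * ⅟2 : R) • γ) * τ * (1 - MonoidAlgebra.of R G s) ≠ 0) :
    ¬ StarClean (R := MonoidAlgebra R G) (MonoidAlgebra.mapDomain (canonicalInvolution s)) := by
  intro hclean
  obtain ⟨u, p, hu, hp, hσp, ha⟩ :=
    hclean ((⅟2 : R) • (1 + γ) * ((⅟2 : R) • (1 - of R G s)))
  have hcv := centralPart_mul_eq_half_smul_sub hs hs2 h1 hu hp hσp ha
  refine h2 ((⅟2 * ⅟2 : R) • 1 - (⅟2 : R) • centralPart p)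
    ((isCentrallySupported_one.smul _).sub ((isCentrallySupported_centralPart p).smul _)) ?_
  rw [mul_assoc, sub_mul, sub_mul, smul_mul_assoc, smul_mul_assoc, smul_mul_assoc, hcv, one_mul]
  module

theorem stmt12 {R G : Type*} [CommRing R] [Invertible (2 : R)] [Group G]
    (s : G) (hs : s ∈ Subgroup.center G) (hs2 : s ^ 2 = 1) (hs1 : s ≠ 1)
    (hG' : (commutator G : Set G) = {1, s})
    (hSLC : Nonempty ((G ⧸ Subgroup.center G) ≃*
      Multiplicative (ZMod 2) × Multiplicative (ZMod 2)))
    (γ τ : MonoidAlgebra R G)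
    (h1 : (1 - γ ^ 2) * τ * (1 - MonoidAlgebra.of R G s) = 0)
    (h2 : ∀ z : MonoidAlgebra R G, (∀ g ∈ z.coeff.support, g ∈ Subgroup.center G) →
      (z - (⅟2 * ⅟2 : R) • γ) * τ * (1 - MonoidAlgebra.of R G s) ≠ 0) :
    ¬ StarClean (R := MonoidAlgebra R G) (MonoidAlgebra.mapDomain (canonicalInvolution s)) :=
  stmt12_general s hs hs2 γ τ h1 h2
end

section
/- Let R = ⊕_{i=1}^k R_i be a commutative unital ring with each R_i local and 2 ∈ U(R), and let * be the classical involution on RQ₈. If RQ₈ is clean and the equation X² + Y² + Z² + 1 = 0 has no solution in any R_i, then RQ₈ is *-clean. -/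
/-!
Every idempotent of `R Q₈` is fixed by the classical involution, so a clean decomposition is
already a `*`-clean one. To see this, let `φ : R Q₈ → ℍ(R) = (-1, -1)_R` send `a 1 ↦ i`,
`xa 0 ↦ j`. If `q` is an idempotent of `ℍ(R)` with `R` local and `u = 2 re q - 1`, then
`u • im q = 0` and `u² = 4 |im q|² + 1`; as `X² + Y² + Z² + 1` has no zero, `u` must be a unit,
so `q` is a scalar. Working componentwise, the same holds over `R = ∏ Rᵢ`. Hence `φ e = c` is a
scalar for an idempotent `e`, and comparing real parts in `φ (e g) = c φ(g)` gives
`e(g⁻¹) = e(a 2 * g⁻¹) = e(g)` for `g ∉ {1, a 2}`.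
-/

/-- A ring is clean if every element is a unit plus an idempotent. -/
def IsCleanRing (R : Type*) [Ring R] : Prop :=
  ∀ a : R, ∃ u e : R, IsUnit u ∧ e * e = e ∧ a = u + e

open Quaternion

namespace QuaternionGroup

variable {M : Type*} [Monoid M] {n : ℕ}

theorem pow_val_eq_pow_of_natCast_eq {a : M} (ha : a ^ (2 * n) = 1) {i : ZMod (2 * n)} {k : ℕ}
    (h : (k : ZMod (2 * n)) = i) : a ^ i.val = a ^ k := by
  rw [← h, ZMod.val_natCast, ← pow_eq_pow_mod k ha]

theorem pow_mul_mul_pow_self {a x : M} (hax : a * x * a = x) (k : ℕ) :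
    a ^ k * x * a ^ k = x := by
  induction k with
  | zero => simp
  | succ k ih =>
    calc a ^ (k + 1) * x * a ^ (k + 1) = a ^ k * (a * x * a) * a ^ k := by
          nth_rw 2 [pow_succ']
          simp only [pow_succ, mul_assoc]
      _ = x := by rw [hax, ih]

def lift [NeZero n] (a x : M) (ha : a ^ (2 * n) = 1) (hax : a * x * a = x) (hx : x * x = a ^ n) :
    QuaternionGroup n →* M where
  toFun
    | .a i => a ^ i.val
    | .xa i => x * a ^ i.val
  map_one' := show a ^ (0 : ZMod (2 * n)).val = 1 by simp
  map_mul' := by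
    have hsplit (i j : ZMod (2 * n)) : a ^ j.val = a ^ i.val * a ^ (j - i).val := by
      rw [← pow_add, pow_val_eq_pow_of_natCast_eq ha]
      simp only [Nat.cast_add, ZMod.natCast_zmod_val, add_sub_cancel]
    rintro (i | i) (j | j)
    · show a ^ (i + j).val = a ^ i.val * a ^ j.val
      rw [hsplit i (i + j), add_sub_cancel_left]
    · show x * a ^ (j - i).val = a ^ i.val * (x * a ^ j.val)
      rw [hsplit i j]
      simp only [← mul_assoc, pow_mul_mul_pow_self hax]
    · show x * a ^ (i + j).val = x * a ^ i.val * a ^ j.val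
      rw [hsplit i (i + j), add_sub_cancel_left, mul_assoc]
    · show a ^ (n + j - i : ZMod (2 * n)).val = x * a ^ i.val * (x * a ^ j.val)
      calc a ^ (n + j - i : ZMod (2 * n)).val = x * x * a ^ (j - i).val := by
            rw [hx, ← pow_add, pow_val_eq_pow_of_natCast_eq ha]
            simp only [Nat.cast_add, ZMod.natCast_zmod_val]
            ring
        _ = x * (a ^ i.val * x * a ^ i.val) * a ^ (j - i).val := by
            rw [pow_mul_mul_pow_self hax]
        _ = x * a ^ i.val * (x * a ^ j.val) := by
            rw [hsplit i j]
            simp only [mul_assoc]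

section
variable [NeZero n] {a x : M} (ha : a ^ (2 * n) = 1) (hax : a * x * a = x) (hx : x * x = a ^ n)

@[simp] theorem lift_a (i : ZMod (2 * n)) : lift a x ha hax hx (.a i) = a ^ i.val := rfl
@[simp] theorem lift_xa (i : ZMod (2 * n)) : lift a x ha hax hx (.xa i) = x * a ^ i.val := rfl

end

variable (R : Type*) [CommRing R]

def toQuaternion : QuaternionGroup 2 →* ℍ[R,-1,-1] :=
  lift ⟨0, 1, 0, 0⟩ ⟨0, 0, 1, 0⟩ (by ext <;> simp [pow_succ]) (by ext <;> simp)
    (by ext <;> simp [pow_succ])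

theorem re_toQuaternion (g : QuaternionGroup 2) :
    (toQuaternion R g).re = if g = 1 then 1 else if g = a 2 then -1 else 0 := by
  have cases4 : ∀ i : ZMod (2 * 2), i = 0 ∨ i = 1 ∨ i = 2 ∨ i = 3 := by decide
  rcases g with i | i <;> obtain rfl | rfl | rfl | rfl := cases4 i <;>
    simp +decide [toQuaternion, pow_succ, ZMod.val_ofNat, ZMod.val_one'']

theorem inv_eq_self_or_a_two_mul_inv_eq_self (g : QuaternionGroup 2) :
    g⁻¹ = g ∨ g ≠ 1 ∧ g ≠ a 2 ∧ a 2 * g⁻¹ = g := by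
  revert g; decide

theorem re_lift_toQuaternion (r : MonoidAlgebra R (QuaternionGroup 2)) :
    (MonoidAlgebra.lift R ℍ[R,-1,-1] _ (toQuaternion R) r).re = r.coeff 1 - r.coeff (a 2) := by
  induction r using MonoidAlgebra.induction_linear with
  | zero => simp
  | add r s hr hs =>
    simp only [map_add, QuaternionAlgebra.re_add, hr, hs, MonoidAlgebra.coeff_add,
      Finsupp.add_apply]
    ring
  | single g c =>
    have h21 : (a 2 : QuaternionGroup 2) ≠ 1 := by decide
    rw [MonoidAlgebra.lift_single, QuaternionAlgebra.re_smul, re_toQuaternion]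
    split_ifs <;> simp_all [MonoidAlgebra.coeff_single, h21.symm]

end QuaternionGroup

namespace QuaternionAlgebra

variable {R S : Type*} [CommRing R] [CommRing S]

@[simps]
def mapRingHom (f : R →+* S) : ℍ[R,-1,-1] →+* ℍ[S,-1,-1] where
  toFun q := ⟨f q.re, f q.imI, f q.imJ, f q.imK⟩
  map_one' := by ext <;> simp
  map_mul' p q := by ext <;> simp
  map_zero' := by ext <;> simp
  map_add' p q := by ext <;> simp

theorem im_eq_zero_of_isIdempotentElem [IsLocalRing R]
    (hR : ¬ ∃ x y z : R, x ^ 2 + y ^ 2 + z ^ 2 + 1 = 0) {q : ℍ[R,-1,-1]}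
    (hq : IsIdempotentElem q) : q.im = 0 := by
  have hre := congrArg re hq.eq
  have hI := congrArg imI hq.eq
  have hJ := congrArg imJ hq.eq
  have hK := congrArg imK hq.eq
  simp only [re_mul, imI_mul, imJ_mul, imK_mul] at hre hI hJ hK
  set u := 2 * q.re - 1
  have huI : u * q.imI = 0 := by linear_combination hI
  have huJ : u * q.imJ = 0 := by linear_combination hJ
  have huK : u * q.imK = 0 := by linear_combination hK
  have hu_sq : u ^ 2 = (2 * q.imI) ^ 2 + (2 * q.imJ) ^ 2 + (2 * q.imK) ^ 2 + 1 := by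
    linear_combination 4 * hre
  have hu : IsUnit u := by
    rcases IsLocalRing.isUnit_or_isUnit_one_sub_self (u ^ 2) with h | h
    · exact (isUnit_pow_iff two_ne_zero).1 h
    · have hu0 : u = 0 := h.mul_left_eq_zero.1 (by
        linear_combination -u * hu_sq - 4 * q.imI * huI - 4 * q.imJ * huJ - 4 * q.imK * huK)
      exact (hR ⟨2 * q.imI, 2 * q.imJ, 2 * q.imK, by rw [← hu_sq, hu0]; ring⟩).elim
  ext <;> simp [hu.mul_right_eq_zero.1 huI, hu.mul_right_eq_zero.1 huJ, hu.mul_right_eq_zero.1 huK]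

theorem im_eq_zero_of_isIdempotentElem_pi {ι : Type*} {A : ι → Type*} [∀ i, CommRing (A i)]
    [∀ i, IsLocalRing (A i)] (hA : ∀ i, ¬ ∃ x y z : A i, x ^ 2 + y ^ 2 + z ^ 2 + 1 = 0)
    {q : ℍ[∀ i, A i,-1,-1]} (hq : IsIdempotentElem q) : q.im = 0 := by
  have h i : (mapRingHom (Pi.evalRingHom A i) q).im = 0 :=
    im_eq_zero_of_isIdempotentElem (hA i) (hq.map _)
  ext : 1
  · simp
  · funext i; simpa using congrArg imI (h i)
  · funext i; simpa using congrArg imJ (h i)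
  · funext i; simpa using congrArg imK (h i)

end QuaternionAlgebra

open QuaternionGroup in
theorem MonoidAlgebra.mapDomain_inv_eq_self_of_isIdempotentElem {R : Type*} [CommRing R]
    (hR : ∀ q : ℍ[R,-1,-1], IsIdempotentElem q → q.im = 0)
    {e : MonoidAlgebra R (QuaternionGroup 2)} (he : IsIdempotentElem e) :
    mapDomain (fun g => g⁻¹) e = e := by
  set φ := lift R ℍ[R,-1,-1] _ (toQuaternion R)
  set c := (φ e).re
  have hφe : φ e = c := by
    rw [← QuaternionAlgebra.re_add_im (φ e), hR _ (he.map φ), add_zero]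
  have hcoeff (g : QuaternionGroup 2) :
      e.coeff g⁻¹ - e.coeff (a 2 * g⁻¹) = c * (toQuaternion R g).re :=
    calc _ = (φ (e * single g 1)).re := by rw [re_lift_toQuaternion]; simp
      _ = c * (toQuaternion R g).re := by
        rw [map_mul, lift_single, one_smul, hφe, QuaternionAlgebra.coe_mul_eq_smul,
          QuaternionAlgebra.re_smul, smul_eq_mul]
  have hinv (g : QuaternionGroup 2) : e.coeff g⁻¹ = e.coeff g := by
    rcases inv_eq_self_or_a_two_mul_inv_eq_self g with h | ⟨h1, h2, h3⟩
    · rw [h]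
    · simpa [h3, re_toQuaternion, h1, h2, sub_eq_zero] using hcoeff g
  ext g
  rw [coeff_mapDomain, ← inv_inv g, Finsupp.mapDomain_apply inv_injective, inv_inv, hinv]

theorem IsCleanRing.starClean {A : Type*} [Ring A] {σ : A → A} (hA : IsCleanRing A)
    (hσ : ∀ e : A, IsIdempotentElem e → σ e = e) : StarClean σ := by
  intro x
  obtain ⟨u, e, hu, he, rfl⟩ := hA x
  exact ⟨u, e, hu, he, hσ e he, rfl⟩

theorem stmt15_general {ι : Type*} (Rι : ι → Type*) [∀ i, CommRing (Rι i)]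
    [∀ i, IsLocalRing (Rι i)]
    (hclean : IsCleanRing (MonoidAlgebra (∀ i, Rι i) (QuaternionGroup 2)))
    (hsol : ∀ i, ¬ ∃ x y z : Rι i, x ^ 2 + y ^ 2 + z ^ 2 + 1 = 0) :
    StarClean (R := MonoidAlgebra (∀ i, Rι i) (QuaternionGroup 2))
      (MonoidAlgebra.mapDomain (fun g : QuaternionGroup 2 => g⁻¹)) :=
  hclean.starClean fun _ he => MonoidAlgebra.mapDomain_inv_eq_self_of_isIdempotentElem
    (fun _ => QuaternionAlgebra.im_eq_zero_of_isIdempotentElem_pi hsol) he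

theorem stmt15 {ι : Type*} [Fintype ι] (Rι : ι → Type*) [∀ i, CommRing (Rι i)]
    [∀ i, IsLocalRing (Rι i)] [Invertible (2 : ∀ i, Rι i)]
    (hclean : IsCleanRing (MonoidAlgebra (∀ i, Rι i) (QuaternionGroup 2)))
    (hsol : ∀ i, ¬ ∃ x y z : Rι i, x ^ 2 + y ^ 2 + z ^ 2 + 1 = 0) :
    StarClean (R := MonoidAlgebra (∀ i, Rι i) (QuaternionGroup 2))
      (MonoidAlgebra.mapDomain (fun g : QuaternionGroup 2 => g⁻¹)) :=
  stmt15_general Rι hclean hsol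
end

section
/- For G = Q₈ × A with A a finite abelian group and * the canonical involution, the complex group algebra ℂG is not *-clean; more generally, for any SLC-group G with canonical involution, ℂG is not *-clean. -/
/-!
Pick a character `χ` of `Z(G)` with `χ s = -1` (it extends from `⟨s⟩ ≅ C₂` because the circle
group is divisible) and let `ρ` be the representation of `G` coinduced from `χ`; every central `z`
acts on it as the scalar `χ z`. Since the involution fixes central elements and multiplies the
others by `s`, which acts as `-1`, `ρ (q^*) + ρ q` is a scalar for every `q ∈ ℂG`, so `ρ` sends
every symmetric idempotent to `0` or `1`. On the other hand, for a noncentral `y` the square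
`y²` is central and some `x` has `x y = s y x`; with `c² = χ (y²)`, the element `(1 + c⁻¹ y) / 2`
maps to an idempotent that `ρ x` conjugates into its complement, hence to neither `0` nor `1`.
Writing that element as `u + p` would make `ρ u` an idempotent or an idempotent minus `1` that
is invertible, which is impossible.
-/

section

variable {k A : Type*} [Field k] [Ring A] [Algebra k A]

theorem IsIdempotentElem.eq_zero_or_one_of_mem_bot [Nontrivial A] {p : A}
    (hp : IsIdempotentElem p) (hbot : p ∈ (⊥ : Subalgebra k A)) : p = 0 ∨ p = 1 := by
  obtain ⟨c, rfl⟩ := Algebra.mem_bot.1 hbot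
  have hc : IsIdempotentElem c := (algebraMap k A).injective (by rw [map_mul]; exact hp)
  rcases IsIdempotentElem.iff_eq_zero_or_one.1 hc with rfl | rfl <;> simp

theorem inv_two_smul_add_inv_two_smul [NeZero (2 : k)] {M : Type*} [AddCommMonoid M]
    [Module k M] (a : M) : (2⁻¹ : k) • a + (2⁻¹ : k) • a = a := by
  rw [← add_smul, ← two_mul, mul_inv_cancel₀ two_ne_zero, one_smul]

theorem isIdempotentElem_inv_two_smul_one_add [NeZero (2 : k)] {u : A} (hu : u * u = 1) :
    IsIdempotentElem ((2⁻¹ : k) • (1 + u)) := by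
  have : (1 + u) * (1 + u) = (2 : k) • (1 + u) := by
    rw [add_mul, one_mul, mul_add, mul_one, hu, two_smul]; abel
  rw [IsIdempotentElem, smul_mul_smul_comm, this, smul_smul, mul_assoc,
    inv_mul_cancel₀ two_ne_zero, mul_one]

theorem inv_two_smul_one_add_ne_zero_and_ne_one [NeZero (2 : k)] {u x : A} (hx : x ≠ 0)
    (hxu : x * u = -(u * x)) : (2⁻¹ : k) • (1 + u) ≠ 0 ∧ (2⁻¹ : k) • (1 + u) ≠ 1 := by
  set e := (2⁻¹ : k) • (1 + u)
  have hxe : x * e = (1 - e) * x :=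
    calc x * e = (2⁻¹ : k) • x - (2⁻¹ : k) • (u * x) := by
          simp only [e, mul_smul_comm, mul_add, mul_one, hxu, smul_add, smul_neg, sub_eq_add_neg]
      _ = (1 - e) * x := by
          rw [sub_mul, one_mul, smul_mul_assoc, add_mul, one_mul, smul_add]
          nth_rw 3 [← inv_two_smul_add_inv_two_smul (k := k) x]
          abel
  constructor
  · rintro he
    rw [he, mul_zero, sub_zero, one_mul] at hxe
    exact hx hxe.symm
  · rintro he
    rw [he, mul_one, sub_self, zero_mul] at hxe
    exact hx hxe

end

theorem not_starClean_of_ringHom {R B F : Type*} [Ring R] [Ring B] [FunLike F R B]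
    [RingHomClass F R B] {σ : R → R} (f : F)
    (hf : ∀ p, IsIdempotentElem p → σ p = p → f p = 0 ∨ f p = 1) {a : R}
    (ha : IsIdempotentElem (f a)) (ha0 : f a ≠ 0) (ha1 : f a ≠ 1) : ¬ StarClean σ := by
  intro h
  obtain ⟨u, p, hu, hp, hσp, rfl⟩ := h a
  have hfu := hu.map f
  rw [map_add] at ha ha0 ha1
  rcases hf p hp hσp with hp0 | hp1
  · rw [hp0, add_zero] at ha ha1
    exact ha1 ((IsIdempotentElem.iff_eq_one_of_isUnit hfu).1 ha)
  · rw [hp1] at ha ha0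
    have h1 : IsIdempotentElem (-f u) := by simpa using ha.one_sub
    have := (IsIdempotentElem.iff_eq_one_of_isUnit hfu.neg).1 h1
    exact ha0 (by rw [← this, add_neg_cancel])

theorem exists_monoidHom_complex_apply_eq_neg_one {A : Type*} [CommGroup A] {a : A}
    (ha2 : a ^ 2 = 1) (ha : a ≠ 1) : ∃ χ : A →* ℂ, χ a = -1 := by
  let i : ZMod 2 →+ Additive A :=
    ZMod.lift 2 ⟨zmultiplesHom _ (Additive.ofMul a), by
      simp only [zmultiplesHom_apply, Nat.cast_ofNat, ← ofMul_zpow, zpow_ofNat, ha2, ofMul_one]⟩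
  have hi1 : i 1 = Additive.ofMul a := by
    simpa using ZMod.lift_coe 2 ⟨zmultiplesHom _ (Additive.ofMul a), _⟩ 1
  have hi : Function.Injective i := by
    refine (injective_iff_map_eq_zero i).2 fun n hn => ?_
    fin_cases n
    · rfl
    · exact absurd (hi1.symm.trans hn) (by simpa using ha)
  obtain ⟨ψ, hψ⟩ := (Module.Baer.of_divisible UnitAddCircle).extension_property_addMonoidHom
    i hi ZMod.toAddCircle
  refine ⟨(Circle.coeHom.compAddChar (AddCircle.toCircle_addChar.compAddMonoidHom ψ)).toMonoidHom,
    ?_⟩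
  change Circle.coeHom (AddCircle.toCircle_addChar (ψ (Additive.ofMul a))) = -1
  rw [← hi1, ← ψ.comp_apply, hψ]
  calc _ = ZMod.stdAddChar ((1 : ℤ) : ZMod 2) := by simp [ZMod.stdAddChar, ZMod.toCircle]
    _ = -1 := by
        rw [ZMod.stdAddChar_coe, ← Complex.exp_pi_mul_I]; congr 1; push_cast; ring

open Subgroup

section

variable {G : Type*} [Group G]

open scoped commutatorElement

theorem sq_mem_of_quotient_mulEquiv {N : Subgroup G} [N.Normal]
    (e : G ⧸ N ≃* Multiplicative (ZMod 2) × Multiplicative (ZMod 2)) (g : G) : g ^ 2 ∈ N := by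
  rw [← QuotientGroup.eq_one_iff, QuotientGroup.mk_pow]
  apply e.injective
  rw [map_pow, map_one]
  generalize e g = v
  revert v
  decide

theorem exists_notMem_of_quotient_mulEquiv {N : Subgroup G} [N.Normal]
    (e : G ⧸ N ≃* Multiplicative (ZMod 2) × Multiplicative (ZMod 2)) : ∃ g : G, g ∉ N := by
  obtain ⟨g, hg⟩ := QuotientGroup.mk_surjective (e.symm (1, Multiplicative.ofAdd 1))
  refine ⟨g, fun h => ?_⟩
  rw [← QuotientGroup.eq_one_iff, hg, MulEquiv.symm_apply_eq, map_one e] at h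
  exact absurd h (by decide)

theorem exists_mul_eq_mul_mul_of_notMem_center {s y : G}
    (hG' : (commutator G : Set G) ⊆ {1, s}) (hy : y ∉ center G) : ∃ x, x * y = s * (y * x) := by
  obtain ⟨x, hx⟩ : ∃ x, x * y ≠ y * x := by simpa [mem_center_iff] using hy
  have hxy : ⁅x, y⁆ ∈ ({1, s} : Set G) :=
    hG' (commutator_def G ▸ commutator_mem_commutator (mem_top x) (mem_top y))
  rcases hxy with h | h
  · exact absurd (commutatorElement_eq_one_iff_mul_comm.1 h) hx
  · refine ⟨x, ?_⟩
    rw [← h, commutatorElement_def]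
    group

end

open MonoidAlgebra

namespace Representation

variable {k G V : Type*} [Field k] [Group G] [AddCommGroup V] [Module k V]

noncomputable abbrev ofCharacter {M : Type*} [Monoid M] (χ : M →* k) : Representation k M k :=
  (algebraMap k (Module.End k k) : k →* Module.End k k).comp χ

noncomputable abbrev centralCoindV (χ : center G →* k) : Submodule k (G → k) :=
  coindV (center G).subtype (ofCharacter χ)

noncomputable abbrev centralCoind (χ : center G →* k) : Representation k G (centralCoindV χ) :=
  coind (center G).subtype (ofCharacter χ)

theorem centralCoind_apply_center (χ : center G →* k) (z : center G) :
    centralCoind χ z = algebraMap k _ (χ z) := by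
  ext f g
  have hf : (f : G → k) (z * g) = χ z * (f : G → k) g := f.2 z g
  change (f : G → k) (g * z) = χ z * (f : G → k) g
  rw [← hf, (mem_center_iff.1 z.2 g)]

open Classical in
instance nontrivial_centralCoindV (χ : center G →* k) : Nontrivial (centralCoindV χ) := by
  let f : G → k := fun g => if hg : g ∈ center G then χ ⟨g, hg⟩ else 0
  have hf : f ∈ centralCoindV χ := by
    intro z g
    by_cases hg : g ∈ center G
    · simp only [f, subtype_apply, dif_pos hg, dif_pos (mul_mem z.2 hg), MonoidHom.coe_comp,
        MonoidHom.coe_coe, Function.comp_apply, Module.algebraMap_end_apply, smul_eq_mul]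
      exact map_mul χ z ⟨g, hg⟩
    · simp [f, hg, (mul_mem_cancel_left z.2).not.2 hg]
  refine nontrivial_of_ne ⟨f, hf⟩ 0 fun h => ?_
  have h1 : χ ⟨1, one_mem _⟩ = 0 := by simpa [f] using congr_fun (congrArg Subtype.val h) 1
  exact one_ne_zero ((map_one χ).symm.trans h1)

variable (ρ : Representation k G V) {s : G}

theorem asAlgebraHom_mapDomain_canonicalInvolution_add_mem_bot (hρs : ρ s = -1)
    (hρZ : ∀ z ∈ center G, ρ z ∈ (⊥ : Subalgebra k (Module.End k V))) (q : MonoidAlgebra k G) :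
    ρ.asAlgebraHom (mapDomain (canonicalInvolution s) q) + ρ.asAlgebraHom q ∈
      (⊥ : Subalgebra k (Module.End k V)) := by
  induction q using MonoidAlgebra.induction_linear with
  | zero => simp
  | add p q hp hq =>
    rw [mapDomain_add, map_add, map_add, add_add_add_comm]
    exact add_mem hp hq
  | single g b =>
    rw [mapDomain_single, asAlgebraHom_single, asAlgebraHom_single]
    by_cases hg : g ∈ center G
    · simp only [canonicalInvolution, if_pos hg]
      exact add_mem (Subalgebra.smul_mem _ (hρZ g hg) b) (Subalgebra.smul_mem _ (hρZ g hg) b)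
    · simp only [canonicalInvolution, if_neg hg, map_mul, hρs, neg_one_mul, smul_neg,
        neg_add_cancel]
      exact zero_mem _

theorem asAlgebraHom_eq_zero_or_one_of_mapDomain_canonicalInvolution_eq [NeZero (2 : k)]
    [Nontrivial V] (hρs : ρ s = -1)
    (hρZ : ∀ z ∈ center G, ρ z ∈ (⊥ : Subalgebra k (Module.End k V))) {p : MonoidAlgebra k G}
    (hp : IsIdempotentElem p) (hσp : mapDomain (canonicalInvolution s) p = p) :
    ρ.asAlgebraHom p = 0 ∨ ρ.asAlgebraHom p = 1 := by
  have h := asAlgebraHom_mapDomain_canonicalInvolution_add_mem_bot ρ hρs hρZ p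
  rw [hσp, ← two_smul k] at h
  have hbot := Subalgebra.smul_mem _ h (2⁻¹ : k)
  rw [inv_smul_smul₀ two_ne_zero] at hbot
  exact (hp.map ρ.asAlgebraHom).eq_zero_or_one_of_mem_bot hbot

theorem exists_asAlgebraHom_isIdempotentElem_ne_zero_ne_one [NeZero (2 : k)] [Nontrivial V]
    (hρs : ρ s = -1) {x y : G} (hxy : x * y = s * (y * x)) {c : k} (hc : c ≠ 0)
    (hy : ρ (y ^ 2) = algebraMap k _ (c ^ 2)) :
    ∃ a, IsIdempotentElem (ρ.asAlgebraHom a) ∧ ρ.asAlgebraHom a ≠ 0 ∧ ρ.asAlgebraHom a ≠ 1 := by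
  set u := c⁻¹ • ρ y
  have hu : u * u = 1 := by
    rw [smul_mul_smul_comm, ← map_mul, ← pow_two y, hy, Algebra.algebraMap_eq_smul_one, smul_smul,
      show c⁻¹ * c⁻¹ * c ^ 2 = 1 by field_simp, one_smul]
  have hxu : ρ x * u = -(u * ρ x) := by
    rw [mul_smul_comm, smul_mul_assoc, ← map_mul, ← map_mul, hxy, map_mul, hρs, neg_one_mul,
      smul_neg]
  have hx : ρ x ≠ 0 := fun h => by
    have h1 := congrArg ρ (mul_inv_cancel x)
    rw [map_mul, h, zero_mul, map_one] at h1
    exact zero_ne_one h1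
  refine ⟨single 1 2⁻¹ + single y (2⁻¹ * c⁻¹), ?_⟩
  have : ρ.asAlgebraHom (single 1 2⁻¹ + single y (2⁻¹ * c⁻¹)) = (2⁻¹ : k) • (1 + u) := by
    rw [map_add, asAlgebraHom_single, asAlgebraHom_single, map_one, smul_add, smul_smul]
  rw [this]
  exact ⟨isIdempotentElem_inv_two_smul_one_add hu, inv_two_smul_one_add_ne_zero_and_ne_one hx hxu⟩

end Representation

theorem stmt17 {G : Type*} [Group G]
    (s : G) (hs : s ∈ Subgroup.center G) (hs2 : s ^ 2 = 1) (hs1 : s ≠ 1)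
    (hG' : (commutator G : Set G) = {1, s})
    (hSLC : Nonempty ((G ⧸ Subgroup.center G) ≃*
      Multiplicative (ZMod 2) × Multiplicative (ZMod 2))) :
    ¬ StarClean (R := MonoidAlgebra ℂ G) (MonoidAlgebra.mapDomain (canonicalInvolution s)) := by
  obtain ⟨e⟩ := hSLC
  open scoped IsMulCommutative in
  obtain ⟨χ, hχ⟩ := exists_monoidHom_complex_apply_eq_neg_one (a := (⟨s, hs⟩ : center G))
    (Subtype.ext hs2) (fun h => hs1 (congrArg Subtype.val h))
  set ρ := Representation.centralCoind χ
  have hρZ (z : G) (hz : z ∈ center G) : ρ z ∈ (⊥ : Subalgebra ℂ (Module.End ℂ _)) :=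
    Algebra.mem_bot.2 ⟨_, (Representation.centralCoind_apply_center χ ⟨z, hz⟩).symm⟩
  have hρs : ρ s = -1 := by
    rw [Representation.centralCoind_apply_center χ ⟨s, hs⟩, hχ, map_neg, map_one]
  obtain ⟨y, hy⟩ := exists_notMem_of_quotient_mulEquiv e
  obtain ⟨x, hxy⟩ := exists_mul_eq_mul_mul_of_notMem_center hG'.subset hy
  have hy2 := sq_mem_of_quotient_mulEquiv e y
  obtain ⟨c, hc⟩ := IsAlgClosed.exists_pow_nat_eq (χ ⟨y ^ 2, hy2⟩) two_pos
  have hc0 : c ≠ 0 := by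
    rintro rfl
    exact (IsUnit.map χ (Group.isUnit _)).ne_zero (by rw [← hc, zero_pow two_ne_zero])
  obtain ⟨a, ha, ha0, ha1⟩ := ρ.exists_asAlgebraHom_isIdempotentElem_ne_zero_ne_one hρs hxy hc0
    (by rw [hc]; exact Representation.centralCoind_apply_center χ ⟨y ^ 2, hy2⟩)
  exact not_starClean_of_ringHom ρ.asAlgebraHom
    (fun _ hp hσp =>
      ρ.asAlgebraHom_eq_zero_or_one_of_mapDomain_canonicalInvolution_eq hρs hρZ hp hσp)
    ha ha0 ha1
end
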